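/- arXiv:2001.07118 — 2 statements merged into one kernel-verified Lean document; each statement's English description precedes it below -/
import Mathlib

section
/- Let G be a single-decision causal influence diagram and X a variable of G other than the decision D. If G does not contain a directed path of the form D ⇝ X ⇝ U for any utility node U, then no SCIM compatible with G has a control incentive on X. -/
attribute [local instance] Classical.propDecidable

noncomputable section

/-! ### d-separation in a directed graph -/

/-- `b` is a collider on a path segment `a - b - c`. -/
def IsCollider {V : Type} (E : V → V → Prop) (a b c : V) : Prop := E a b ∧ E c b

/-- The triple `a - b - c` on an undirected path blocks the path w.r.t. `Z`:
either the middle node is a non-collider (chain or fork) belonging to `Z`, or it is a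
collider such that neither it nor any of its descendants belongs to `Z`. -/
def BlockedTriple {V : Type} (E : V → V → Prop) (Z : Set V) (a b c : V) : Prop :=
  (¬ IsCollider E a b c ∧ b ∈ Z) ∨
    (IsCollider E a b c ∧ ∀ w, Relation.ReflTransGen E b w → w ∉ Z)

/-- An undirected path: a nonempty list of distinct vertices in which consecutive
vertices are joined by an edge in one direction or the other. -/
def IsUPath {V : Type} (E : V → V → Prop) (p : List V) : Prop :=
  p ≠ [] ∧ p.Nodup ∧ p.Chain' (fun a b => E a b ∨ E b a)

/-- A path is d-separated (blocked) by `Z` if some consecutive triple blocks it. -/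
def BlockedPath {V : Type} (E : V → V → Prop) (Z : Set V) (p : List V) : Prop :=
  ∃ l₁ a b c l₂, p = l₁ ++ a :: b :: c :: l₂ ∧ BlockedTriple E Z a b c

/-- `Z` d-separates the node sets `S` and `T`: every undirected path from a node of `S`
to a node of `T` is blocked by `Z`. -/
def DSep {V : Type} (E : V → V → Prop) (S T Z : Set V) : Prop :=
  ∀ p : List V, IsUPath E p → (∃ s ∈ S, p.head? = some s) →
    (∃ t ∈ T, p.getLast? = some t) → BlockedPath E Z p

/-! ### Causal influence diagrams and structural causal influence models -/

/-- A single-decision causal influence diagram: a finite DAG whose vertices are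
partitioned into structure nodes, one decision node and utility nodes
(the utility nodes having no children). -/
structure CID (V : Type) where
  edge : V → V → Prop
  acyclic : ∀ v, ¬ Relation.TransGen edge v v
  decision : V
  utility : Finset V
  decision_not_utility : decision ∉ utility
  utility_no_children : ∀ u ∈ utility, ∀ v, ¬ edge u v

/-- A (single-decision) structural causal influence model over a CID: finite nonempty
domains for every variable, one finite-domain exogenous variable per variable, structural
functions for every non-decision variable, real-valued (injectively embedded, i.e. the
domain is a subset of ℝ) utility variables, and mutually independent exogenous
distributions. -/
structure SCIM (V : Type) extends CID V where
  dom : V → Type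
  dom_fintype : ∀ v, Fintype (dom v)
  dom_nonempty : ∀ v, Nonempty (dom v)
  edom : V → Type
  edom_fintype : ∀ v, Fintype (edom v)
  edom_nonempty : ∀ v, Nonempty (edom v)
  utilVal : ∀ v, dom v → ℝ
  utilVal_inj : ∀ v ∈ utility, Function.Injective (utilVal v)
  f : ∀ v, v ≠ decision → (∀ w, edge w v → dom w) → edom v → dom v
  μ : ∀ v, edom v → ℝ
  μ_nonneg : ∀ v e, 0 ≤ μ v e
  μ_sum : ∀ v, ∑ e ∈ @Finset.univ (edom v) (edom_fintype v), μ v e = 1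

variable {V : Type} [Fintype V] [DecidableEq V]

instance (M : SCIM V) (v : V) : Fintype (M.dom v) := M.dom_fintype v
instance (M : SCIM V) (v : V) : Nonempty (M.dom v) := M.dom_nonempty v
instance (M : SCIM V) (v : V) : Fintype (M.edom v) := M.edom_fintype v
instance (M : SCIM V) (v : V) : Nonempty (M.edom v) := M.edom_nonempty v

namespace SCIM

variable (M : SCIM V)

/-- A joint setting of the exogenous variables. -/
abbrev Env := ∀ v, M.edom v

/-- Joint probability of an exogenous setting (the exogenous variables are independent). -/
def prob (ε : M.Env) : ℝ := ∏ v, M.μ v (ε v)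

/-- The type of structural mechanisms for the vertex `v`. -/
def Mechanism (v : V) : Type := (∀ w, M.edge w v → M.dom w) → M.edom v → M.dom v

/-- A policy: a structural function for the decision node. -/
abbrev Policy := M.Mechanism M.decision

theorem edge_wf : WellFounded M.edge := by
  haveI : IsTrans V (Relation.TransGen M.edge) := ⟨fun _ _ _ h h' => h.trans h'⟩
  haveI : IsIrrefl V (Relation.TransGen M.edge) := ⟨M.acyclic⟩
  exact Subrelation.wf (fun h => Relation.TransGen.single h)
    (Finite.wellFounded_of_trans_of_irrefl _)

/-- The unique solution of the structural equations `mech` given exogenous setting `ε`. -/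
def solve (mech : ∀ v, M.Mechanism v) (ε : M.Env) : ∀ v, M.dom v :=
  WellFounded.fix (C := fun v => M.dom v) M.edge_wf
    (fun v IH => mech v (fun w hw => IH w hw) (ε v))

/-- The mechanisms of the SCM `M_π` obtained by fixing the policy `π`. -/
def polMech (π : M.Policy) : ∀ v, M.Mechanism v :=
  fun v => if h : v = M.decision then cast (congrArg M.Mechanism h).symm π else M.f v h

/-- Apply an intervention (a partial assignment `ι` of values) to mechanisms:
intervened variables are set to constants. -/
def doMech (mech : ∀ v, M.Mechanism v) (ι : ∀ v, Option (M.dom v)) : ∀ v, M.Mechanism v :=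
  fun v => match ι v with
    | some x => fun _ _ => x
    | none => mech v

/-- The single intervention `do(X = x)` as a partial assignment. -/
def single (X : V) (x : M.dom X) : ∀ v, Option (M.dom v) :=
  fun v => if h : v = X then some (cast (congrArg M.dom h).symm x) else none

/-- The value `W(ε)` of each variable in `M_π`. -/
def val (π : M.Policy) (ε : M.Env) : ∀ v, M.dom v := M.solve (M.polMech π) ε

/-- The potential response: the value of each variable in the submodel of `M_π`
given by the intervention `ι`. -/
def valDo (π : M.Policy) (ι : ∀ v, Option (M.dom v)) (ε : M.Env) : ∀ v, M.dom v :=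
  M.solve (M.doMech (M.polMech π) ι) ε

/-- Total utility of an assignment of values to the variables. -/
def totUtil (a : ∀ v, M.dom v) : ℝ := ∑ v ∈ M.utility, M.utilVal v (a v)

/-- Expected total utility of the policy `π`. -/
def EU (π : M.Policy) : ℝ := ∑ ε : M.Env, M.prob ε * M.totUtil (M.val π ε)

/-- An optimal policy maximizes expected total utility. -/
def Optimal (π : M.Policy) : Prop := ∀ π' : M.Policy, M.EU π' ≤ M.EU π

/-- A decision context: a joint value of the parents of the decision. -/
abbrev Ctx := ∀ w, M.edge w M.decision → M.dom w

/-- The decision context realized by the exogenous setting `ε` in `M_π`. -/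
def ctx (π : M.Policy) (ε : M.Env) : M.Ctx := fun w _ => M.val π ε w

/-- Probability of a decision context in `M_π`. -/
def ctxProb (π : M.Policy) (pa : M.Ctx) : ℝ :=
  ∑ ε : M.Env, if M.ctx π ε = pa then M.prob ε else 0

/-- Conditional expectation of `g` given the decision context `pa` in `M_π`. -/
def condExp (π : M.Policy) (pa : M.Ctx) (g : M.Env → ℝ) : ℝ :=
  (∑ ε : M.Env, if M.ctx π ε = pa then M.prob ε * g ε else 0) / M.ctxProb π pa

/-- The nested potential response `𝒰_{X_d}(ε)`: total utility when `X` is set to the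
value it would take under `do(D = d)`, everything else following `M_π`. -/
def nestedU (π : M.Policy) (X : V) (d : M.dom M.decision) (ε : M.Env) : ℝ :=
  M.totUtil (M.valDo π (M.single X (M.valDo π (M.single M.decision d) ε X)) ε)

/-- Control incentive on `X`: under every optimal policy, in some positive-probability
decision context some alternative decision `d` changes expected utility through `X`. -/
def ControlIncentive (X : V) : Prop :=
  ∀ π : M.Policy, M.Optimal π →
    ∃ pa : M.Ctx, 0 < M.ctxProb π pa ∧ ∃ d : M.dom M.decision,
      M.condExp π pa (M.nestedU π X d) ≠
        M.condExp π pa (fun ε => M.totUtil (M.val π ε))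

/-- Response incentive on `X`: under every optimal policy some intervention on `X`
changes the decision for some exogenous setting. -/
def ResponseIncentive (X : V) : Prop :=
  ∀ π : M.Policy, M.Optimal π →
    ∃ (x : M.dom X) (ε : M.Env),
      M.valDo π (M.single X x) ε M.decision ≠ M.val π ε M.decision

/-- Conditional probability of `event` given `cond` in `M_π`. -/
def cprob (π : M.Policy) (event cond : M.Env → Prop) : ℝ :=
  (∑ ε : M.Env, if cond ε ∧ event ε then M.prob ε else 0) /
    (∑ ε : M.Env, if cond ε then M.prob ε else 0)

/-- Counterfactual fairness of a policy `π` with respect to a protected attribute `A`: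
conditional on any positive-probability decision context and value of `A`, intervening
on `A` does not change the distribution of the decision. -/
def CFair (π : M.Policy) (A : V) : Prop :=
  ∀ (d : M.dom M.decision) (pa : M.Ctx) (a a' : M.dom A),
    (0 < ∑ ε : M.Env, if M.ctx π ε = pa ∧ M.val π ε A = a then M.prob ε else 0) →
      M.cprob π (fun ε => M.valDo π (M.single A a') ε M.decision = d)
          (fun ε => M.ctx π ε = pa ∧ M.val π ε A = a) =
        M.cprob π (fun ε => M.val π ε M.decision = d)
          (fun ε => M.ctx π ε = pa ∧ M.val π ε A = a)

/-- Expected value of the sum of utility variables in `S`. -/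
def EUOn (S : Finset V) (π : M.Policy) : ℝ :=
  ∑ ε : M.Env, M.prob ε * ∑ v ∈ S, M.utilVal v (M.val π ε v)

/-- The policy obtained from `π` by replacing the observations of the decision-parents
that are descendants of `X` by the fixed values `p`. -/
def modPolicy (π : M.Policy) (X : V) (p : M.Ctx) : M.Policy :=
  fun pa e =>
    π (fun w hw => if Relation.ReflTransGen M.edge X w then p w hw else pa w hw) e

end SCIM

/-- The graphical criterion for control incentives: a directed path `D ⇝ X ⇝ U`
for some utility node `U`. -/
def CICriterion {V : Type} (G : CID V) (X : V) : Prop :=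
  Relation.ReflTransGen G.edge G.decision X ∧
    ∃ u ∈ G.utility, Relation.ReflTransGen G.edge X u

/-- The graphical criterion for response incentives: a directed path from `X` to some
parent `W` of the decision `D`, a directed path from `D` to some utility node `U`, and
`W` d-connected to `U` given `({D} ∪ Pa_D) \ {W}`. -/
def RICriterion {V : Type} (G : CID V) (X : V) : Prop :=
  ∃ W, G.edge W G.decision ∧ ∃ u ∈ G.utility,
    Relation.ReflTransGen G.edge X W ∧
    Relation.ReflTransGen G.edge G.decision u ∧
    ¬ DSep G.edge {W} {u} (({G.decision} ∪ {w | G.edge w G.decision}) \ {W})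

end

section Aux

attribute [local instance] Classical.propDecidable

namespace SCIM

variable {V : Type} [Fintype V] [DecidableEq V] (M : SCIM V)

lemma solve_eq (mech : ∀ v, M.Mechanism v) (ε : M.Env) (v : V) :
    M.solve mech ε v = mech v (fun w _ => M.solve mech ε w) (ε v) := by
  unfold solve
  rw [WellFounded.fix_eq]

lemma solve_congr {mech mech' : ∀ v, M.Mechanism v} (ε : M.Env) (v : V)
    (h : ∀ w, Relation.ReflTransGen M.edge w v → mech w = mech' w) :
    M.solve mech ε v = M.solve mech' ε v := by
  induction v using WellFounded.induction M.edge_wf with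
  | _ v IH =>
    rw [M.solve_eq, M.solve_eq, h v .refl]
    congr 1
    funext w hw
    exact IH w hw (fun w' hw' => h w' (hw'.trans (Relation.ReflTransGen.single hw)))

lemma valDo_eq_val_of_not_anc (π : M.Policy) (Y : V) (y : M.dom Y) (ε : M.Env) (v : V)
    (h : ¬ Relation.ReflTransGen M.edge Y v) :
    M.valDo π (M.single Y y) ε v = M.val π ε v := by
  apply M.solve_congr
  intro w hw
  have hwY : w ≠ Y := fun e => h (e ▸ hw)
  simp [SCIM.doMech, SCIM.single, hwY]

lemma solve_do_natural (mech : ∀ v, M.Mechanism v) (ε : M.Env) (X : V) (v : V) :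
    M.solve (M.doMech mech (M.single X (M.solve mech ε X))) ε v = M.solve mech ε v := by
  induction v using WellFounded.induction M.edge_wf with
  | _ v IH =>
    by_cases hv : v = X
    · subst hv
      rw [M.solve_eq]
      simp [SCIM.doMech, SCIM.single]
    · have hm : M.doMech mech (M.single X (M.solve mech ε X)) v = mech v := by
        simp [SCIM.doMech, SCIM.single, hv]
      conv_lhs => rw [M.solve_eq, hm]
      conv_rhs => rw [M.solve_eq]
      congr 1
      funext w hw
      exact IH w hw

end SCIM

end Aux

/-- **Control incentive graphical criterion: soundness.**
If a single-decision CID `G` has no directed path `D ⇝ X ⇝ U` to any utility node `U`,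
then no SCIM compatible with `G` has a control incentive on `X ≠ D`. -/
theorem control_incentive_criterion_soundness
    {V : Type} [Fintype V] [DecidableEq V] (G : CID V) (X : V) (hX : X ≠ G.decision)
    (h : ¬ CICriterion G X) :
    ∀ M : SCIM V, M.toCID = G → ¬ M.ControlIncentive X := by
  intro M hM hCI
  subst hM
  have key : ∀ (π : M.Policy) (d : M.dom M.decision) (ε : M.Env),
      M.nestedU π X d ε = M.totUtil (M.val π ε) := by
    intro π d ε
    by_cases hDX : Relation.ReflTransGen M.edge M.decision X
    · have hXU : ∀ u ∈ M.utility, ¬ Relation.ReflTransGen M.edge X u := by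
        intro u hu hXu
        exact h ⟨hDX, u, hu, hXu⟩
      unfold SCIM.nestedU SCIM.totUtil
      apply Finset.sum_congr rfl
      intro u hu
      congr 1
      exact M.valDo_eq_val_of_not_anc π X _ ε u (hXU u hu)
    · have hx : M.valDo π (M.single M.decision d) ε X = M.val π ε X := by
        apply M.solve_congr
        intro w hw
        have hwD : w ≠ M.decision := fun e => hDX (e ▸ hw)
        simp [SCIM.doMech, SCIM.single, hwD]
      unfold SCIM.nestedU
      rw [hx]
      congr 1
      funext v
      exact M.solve_do_natural (M.polMech π) ε X v
  haveI hfin : Finite M.Policy := by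
    unfold SCIM.Policy SCIM.Mechanism
    infer_instance
  haveI hne : Nonempty M.Policy := ⟨fun _ _ => Classical.arbitrary _⟩
  obtain ⟨π₀, hπ₀⟩ := Finite.exists_max M.EU
  obtain ⟨pa, _, d, hne'⟩ := hCI π₀ hπ₀
  have hfe : M.nestedU π₀ X d = fun ε => M.totUtil (M.val π₀ ε) := funext (key π₀ d)
  rw [hfe] at hne'
  exact hne' rfl
end

section
/- Let M be a single-decision SCIM with decision D, X a variable, and π any policy. If there is no directed path from D to X in the graph of M, then for every decision context pa_D with positive probability and every decision d, the nested potential response satisfies E_π[𝒰_{X_d} | pa_D] = E_π[𝒰 | pa_D]; the same conclusion holds if there is no directed path from X to any utility node. In particular, in either case there is no control incentive on X in M. -/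
attribute [local instance] Classical.propDecidable

/-! An intervention on `X` can only change descendants of `X`, and setting `X` to the value
it takes anyway changes nothing. With no path `D ⇝ X`, the intervention `do(D = d)` leaves
`X` at its factual value, so `𝒰_{X_d} = 𝒰` pointwise; with no path from `X` to a utility
node, `do(X = x)` leaves every utility node at its factual value for any `x`. Either way the
two conditional expectations agree term by term, and since the finitely many policies admit an
optimal one, the control incentive fails for it. -/

namespace SCIM

variable {V : Type} (M : SCIM V)

theorem solve_apply [Fintype V] [DecidableEq V] (mech : ∀ v, M.Mechanism v) (ε : M.Env)
    (v : V) :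
    M.solve mech ε v = mech v (fun w _ => M.solve mech ε w) (ε v) :=
  WellFounded.fix_eq _ _ v

theorem doMech_single_of_ne [DecidableEq V] (mech : ∀ v, M.Mechanism v) {X v : V}
    (x : M.dom X) (hv : v ≠ X) : M.doMech mech (M.single X x) v = mech v := by
  simp [doMech, single, hv]

theorem doMech_single_self [DecidableEq V] (mech : ∀ v, M.Mechanism v) (X : V)
    (x : M.dom X) : M.doMech mech (M.single X x) X = fun _ _ => x := by
  simp only [doMech, single, dite_true]
  rfl

theorem solve_doMech_single_of_not_reflTransGen [Fintype V] [DecidableEq V]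
    (mech : ∀ v, M.Mechanism v) {X v : V} (x : M.dom X) (ε : M.Env)
    (hv : ¬ Relation.ReflTransGen M.edge X v) :
    M.solve (M.doMech mech (M.single X x)) ε v = M.solve mech ε v := by
  induction v using WellFounded.induction M.edge_wf with
  | _ v IH =>
    have hvX : v ≠ X := fun e => hv (e ▸ Relation.ReflTransGen.refl)
    rw [solve_apply M (M.doMech _ _) ε v, solve_apply M mech ε v,
      doMech_single_of_ne M mech x hvX]
    congr 1
    funext w hw
    exact IH w hw fun hXw => hv (hXw.tail hw)

theorem solve_doMech_single_solve [Fintype V] [DecidableEq V] (mech : ∀ v, M.Mechanism v)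
    (X : V) (ε : M.Env) :
    M.solve (M.doMech mech (M.single X (M.solve mech ε X))) ε = M.solve mech ε := by
  funext v
  induction v using WellFounded.induction M.edge_wf with
  | _ v IH =>
    by_cases hvX : v = X
    · subst hvX
      rw [solve_apply, doMech_single_self]
    · rw [solve_apply M (M.doMech _ _) ε v, solve_apply M mech ε v,
        doMech_single_of_ne M mech _ hvX]
      congr 1
      funext w hw
      exact IH w hw

theorem nestedU_eq_totUtil_of_not_reflTransGen_decision [Fintype V] [DecidableEq V]
    (π : M.Policy) {X : V} (hX : ¬ Relation.ReflTransGen M.edge M.decision X)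
    (d : M.dom M.decision) (ε : M.Env) :
    M.nestedU π X d ε = M.totUtil (M.val π ε) := by
  have hXd : M.valDo π (M.single M.decision d) ε X = M.val π ε X :=
    M.solve_doMech_single_of_not_reflTransGen _ d ε hX
  rw [nestedU, hXd, valDo, val, solve_doMech_single_solve]

theorem nestedU_eq_totUtil_of_not_reflTransGen_utility [Fintype V] [DecidableEq V]
    (π : M.Policy) {X : V} (hX : ∀ u ∈ M.utility, ¬ Relation.ReflTransGen M.edge X u)
    (d : M.dom M.decision) (ε : M.Env) :
    M.nestedU π X d ε = M.totUtil (M.val π ε) :=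
  Finset.sum_congr rfl fun u hu =>
    congrArg (M.utilVal u) (M.solve_doMech_single_of_not_reflTransGen _ _ ε (hX u hu))

theorem exists_optimal [Fintype V] [DecidableEq V] : ∃ π : M.Policy, M.Optimal π := by
  have : ∀ p : Prop, Finite p := fun _ => Finite.of_subsingleton
  have : Finite M.Policy := by
    unfold Policy Mechanism
    infer_instance
  have : Nonempty M.Policy := ⟨fun _ _ => Classical.arbitrary _⟩
  exact Finite.exists_max M.EU

end SCIM

/-- If there is no directed path `D ⇝ X`, or no directed path from `X` to any utility
node, then for every policy `π`, every positive-probability decision context and every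
decision `d`, the nested potential response satisfies
`E_π[𝒰_{X_d} | pa_D] = E_π[𝒰 | pa_D]`; in particular there is no control incentive
on `X`. -/
theorem no_path_no_control_incentive
    {V : Type} [Fintype V] [DecidableEq V] (M : SCIM V) (X : V)
    (h : ¬ Relation.ReflTransGen M.edge M.decision X ∨
      ∀ u ∈ M.utility, ¬ Relation.ReflTransGen M.edge X u) :
    (∀ (π : M.Policy) (pa : M.Ctx), 0 < M.ctxProb π pa → ∀ d : M.dom M.decision,
        M.condExp π pa (M.nestedU π X d) =
          M.condExp π pa (fun ε => M.totUtil (M.val π ε))) ∧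
      ¬ M.ControlIncentive X := by
  have nestedU_eq : ∀ π d, M.nestedU π X d = fun ε => M.totUtil (M.val π ε) := by
    intro π d
    funext ε
    rcases h with hD | hU
    · exact M.nestedU_eq_totUtil_of_not_reflTransGen_decision π hD d ε
    · exact M.nestedU_eq_totUtil_of_not_reflTransGen_utility π hU d ε
  have condExp_eq : ∀ (π : M.Policy) (pa : M.Ctx), 0 < M.ctxProb π pa → ∀ d,
      M.condExp π pa (M.nestedU π X d) = M.condExp π pa (fun ε => M.totUtil (M.val π ε)) :=
    fun π pa _ d => by rw [nestedU_eq]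
  refine ⟨condExp_eq, fun hCI => ?_⟩
  obtain ⟨π, hπ⟩ := M.exists_optimal
  obtain ⟨pa, hpos, d, hne⟩ := hCI π hπ
  exact hne (condExp_eq π pa hpos d)
end
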